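/- Let D be an integral domain with quotient field K such that the intersection of the maximal ideals of D of finite index (i.e., those maximal ideals m with D/m a finite ring) is the zero ideal, and let n be a positive integer. Then Int(Mₙ(D)) = Int(Mₙ^{irr}(D), Mₙ(D)), where Mₙ^{irr}(D) is the set of matrices in Mₙ(D) whose characteristic polynomial is irreducible in D[X]; that is, Mₙ^{irr}(D) is polynomially dense in Mₙ(D). -/

import Mathlib

open Polynomial

/-- `IntOn D K S` is the set of polynomials `f ∈ K[X]` that are integer-valued on the set
`S ⊆ Mₙ(D)`: for every `M ∈ S`, evaluating `f` at the image of `M` in `Mₙ(K)` yields a matrix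
all of whose entries lie in (the image of) `D`. -/
def IntOn (D K : Type*) [CommRing D] [Field K] [Algebra D K] {n : ℕ}
    (S : Set (Matrix (Fin n) (Fin n) D)) : Set (Polynomial K) :=
  {f | ∀ M ∈ S, ∀ i j, ∃ d : D,
    algebraMap D K d = (Polynomial.aeval (M.map (algebraMap D K)) f) i j}

/-!
Matrices with irreducible characteristic polynomial meet every residue class of `Mₙ(D)` modulo
every nonzero `b`: choose a maximal ideal `m` of finite index with `b ∉ m`, take a matrix over the
finite field `D/m` whose characteristic polynomial is irreducible (multiplication by a primitive
element of the degree-`n` extension), and lift it entrywise, compatibly with the given class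
modulo `b`, since `b` is a unit mod `m`; a monic polynomial irreducible mod `m` is irreducible.
Such congruence density implies polynomial density: if `b f = g ∈ D[X]`, then `g(M)` mod `b`
depends only on `M` mod `b`, so `b ∣ g(M)` follows from `b ∣ g(N) = b f(N)`.
-/

theorem PowerBasis.irreducible_charpoly_leftMulMatrix {F E : Type*} [Field F] [CommRing E]
    [IsDomain E] [Algebra F E] (pb : PowerBasis F E) :
    Irreducible (Algebra.leftMulMatrix pb.basis pb.gen).charpoly := by
  rw [charpoly_leftMulMatrix]
  exact minpoly.irreducible pb.isIntegral_gen

theorem FiniteField.exists_matrix_irreducible_charpoly (F : Type*) [Field F] [Finite F] {n : ℕ}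
    (hn : n ≠ 0) : ∃ C : Matrix (Fin n) (Fin n) F, Irreducible C.charpoly := by
  have : NeZero n := ⟨hn⟩
  obtain ⟨p, _⟩ := CharP.exists F
  have : Fact p.Prime := ⟨CharP.char_is_prime F p⟩
  let pb := Field.powerBasisOfFiniteOfSeparable F (Extension F p n)
  have hdim : pb.dim = n := pb.finrank.symm.trans (finrank_extension F p n)
  refine ⟨Matrix.reindex (finCongr hdim) (finCongr hdim) (Algebra.leftMulMatrix pb.basis pb.gen),
    ?_⟩
  rw [Matrix.charpoly_reindex]
  exact pb.irreducible_charpoly_leftMulMatrix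

theorem Matrix.map_aeval {R S ι : Type*} [CommRing R] [CommRing S] [Fintype ι] [DecidableEq ι]
    (φ : R →+* S) (M : Matrix ι ι R) (g : R[X]) :
    (aeval M g).map φ = aeval (M.map φ) (g.map φ) :=
  map_aeval_eq_aeval_map (ψ := φ.mapMatrix)
    (by ext; simp [Matrix.algebraMap_matrix_apply, apply_ite φ]) g M

theorem Ideal.Quotient.exists_mk_eq_and_mk_span_singleton_eq {D : Type*} [CommRing D]
    {m : Ideal D} [m.IsMaximal] {b : D} (hb : b ∉ m) (c : D ⧸ m) (x : D) :
    ∃ z, mk m z = c ∧ mk (span {b}) z = mk (span {b}) x := by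
  let := Ideal.Quotient.field m
  have hb' : mk m b ≠ 0 := by rwa [Ne, eq_zero_iff_mem]
  obtain ⟨a, ha⟩ := mk_surjective ((mk m b)⁻¹ * (c - mk m x))
  refine ⟨x + b * a, ?_, ?_⟩
  · rw [map_add, map_mul, ha, mul_inv_cancel_left₀ hb', add_sub_cancel]
  · rw [Ideal.Quotient.eq, add_sub_cancel_left]
    exact mul_mem_right _ _ (mem_span_singleton_self b)

theorem Matrix.exists_irreducible_charpoly_map_eq {D : Type*} [CommRing D] [IsDomain D]
    {m : Ideal D} [m.IsMaximal] [Finite (D ⧸ m)] {n : ℕ} (hn : n ≠ 0) {b : D} (hb : b ∉ m)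
    (M : Matrix (Fin n) (Fin n) D) :
    ∃ N : Matrix (Fin n) (Fin n) D, Irreducible N.charpoly ∧
      N.map (Ideal.Quotient.mk (Ideal.span {b})) = M.map (Ideal.Quotient.mk (Ideal.span {b})) := by
  let := Ideal.Quotient.field m
  obtain ⟨C, hC⟩ := FiniteField.exists_matrix_irreducible_charpoly (D ⧸ m) hn
  choose z hzm hzb using fun i j =>
    Ideal.Quotient.exists_mk_eq_and_mk_span_singleton_eq hb (C i j) (M i j)
  have hNC : (Matrix.of z).map (Ideal.Quotient.mk m) = C := Matrix.ext hzm
  refine ⟨Matrix.of z, ?_, Matrix.ext hzb⟩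
  refine (Matrix.of z).charpoly_monic.irreducible_of_irreducible_map (Ideal.Quotient.mk m) _ ?_
  rwa [← Matrix.charpoly_map, hNC]

theorem intOn_subset_intOn_univ_of_forall_exists_map_eq {D K : Type*} [CommRing D] [Field K]
    [Algebra D K] [IsFractionRing D K] {n : ℕ} (S : Set (Matrix (Fin n) (Fin n) D))
    (hS : ∀ M : Matrix (Fin n) (Fin n) D, ∀ b ∈ nonZeroDivisors D, ∃ N ∈ S,
      N.map (Ideal.Quotient.mk (Ideal.span {b})) = M.map (Ideal.Quotient.mk (Ideal.span {b}))) :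
    IntOn D K S ⊆ IntOn D K (Set.univ : Set (Matrix (Fin n) (Fin n) D)) := by
  intro f hf M _ i j
  set φ := algebraMap D K
  obtain ⟨b, hb0, hb⟩ := IsLocalization.integerNormalization_spec (nonZeroDivisors D) f
  set g := IsLocalization.integerNormalization (nonZeroDivisors D) f
  obtain ⟨N, hNS, hNM⟩ := hS M b hb0
  have hg : ∀ P : Matrix (Fin n) (Fin n) D, ∀ i j,
      φ (aeval P g i j) = φ b * aeval (P.map φ) f i j := fun P i j => by
    rw [← Matrix.map_apply (f := φ), Matrix.map_aeval, hb, ← algebraMap_smul K b f, map_smul]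
    rfl
  obtain ⟨e, he⟩ := hf N hNS i j
  have hgN : aeval N g i j = b * e :=
    IsFractionRing.injective D K (by rw [hg, ← he, map_mul])
  obtain ⟨c, hc⟩ : b ∣ aeval M g i j - aeval N g i j := by
    rw [← Ideal.mem_span_singleton, ← Ideal.Quotient.eq,
      ← Matrix.map_apply (f := Ideal.Quotient.mk _), Matrix.map_aeval, ← hNM, ← Matrix.map_aeval]
    rfl
  refine ⟨e + c, (IsLocalization.map_units K ⟨b, hb0⟩).mul_left_cancel ?_⟩
  rw [← map_mul, ← hg]
  congr 1
  linear_combination -hc - hgN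

/-- Let `D` be a domain with quotient field `K` such that the intersection of
the maximal ideals of `D` of finite index (those `m` with `D/m` finite) is the zero ideal, and
let `n` be positive.  Then `Int(Mₙ(D)) = Int(Mₙ^{irr}(D), Mₙ(D))`, where `Mₙ^{irr}(D)` is the
set of matrices whose characteristic polynomial is irreducible in `D[X]`; i.e. `Mₙ^{irr}(D)` is
polynomially dense in `Mₙ(D)`. -/
theorem intOn_univ_eq_intOn_irreducible (D K : Type*) [CommRing D] [IsDomain D] [Field K]
    [Algebra D K] [IsFractionRing D K]
    (hmax : (⨅ m ∈ {m : Ideal D | m.IsMaximal ∧ Finite (D ⧸ m)}, m) = ⊥)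
    (n : ℕ) (hn : 0 < n) :
    IntOn D K (Set.univ : Set (Matrix (Fin n) (Fin n) D)) =
      IntOn D K {M : Matrix (Fin n) (Fin n) D | Irreducible M.charpoly} := by
  refine subset_antisymm (fun f hf M _ => hf M trivial)
    (intOn_subset_intOn_univ_of_forall_exists_map_eq _ fun M b hb => ?_)
  have hb_notMem : b ∉ ⨅ m ∈ {m : Ideal D | m.IsMaximal ∧ Finite (D ⧸ m)}, m := by
    rw [hmax, Submodule.mem_bot]
    exact nonZeroDivisors.ne_zero hb
  simp only [Submodule.mem_iInf, not_forall] at hb_notMem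
  obtain ⟨m, ⟨hm, hfin⟩, hbm⟩ := hb_notMem
  exact Matrix.exists_irreducible_charpoly_map_eq hn.ne' hbm M
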